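/- arXiv:1202.1376 — 2 statements merged into one kernel-verified Lean document; each statement's English description precedes it below -/
import Mathlib

section
/- For every n ≥ 1, the von Neumann entropy of the decoherence matrix restricted to A_P^{(n)} satisfies S_{A_P^{(n)}} = −Σ_{j} ( p_L^{(n)}(j) log₂ p_L^{(n)}(j) + p_R^{(n)}(j) log₂ p_R^{(n)}(j) ), where the sum runs over j ∈ {−n, −n+2, …, n−2, n} and 0·log₂ 0 = 0. -/
open Matrix Filter
open scoped BigOperators Classical

noncomputable section

/-- Index in `Fin 2` of a direction: `false` ↔ `-1` (index `0`), `true` ↔ `1` (index `1`). -/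
def bidx (b : Bool) : Fin 2 := if b then 1 else 0

/-- The standard basis vector `e_j`, `j ∈ {-1,1}`, of `ℂ²`. -/
def eVec (b : Bool) : Fin 2 → ℂ := fun i => if i = bidx b then 1 else 0

/-- The projection `e_j e_j†`. -/
def projC (b : Bool) : Matrix (Fin 2) (Fin 2) ℂ :=
  Matrix.single (bidx b) (bidx b) 1

/-- `P_j = e_j e_j† U`. -/
def pMat (U : Matrix (Fin 2) (Fin 2) ℂ) (b : Bool) : Matrix (Fin 2) (Fin 2) ℂ :=
  projC b * U

/-- The weight of a path `ξ = (ξ_n, …, ξ_1)` (here `ξ i` is step `i+1`):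
`w(ξ) = P_{ξ_n} ⋯ P_{ξ_1} φ₀`. -/
def weight (U : Matrix (Fin 2) (Fin 2) ℂ) (φ₀ : Fin 2 → ℂ) {n : ℕ} (ξ : Fin n → Bool) :
    Fin 2 → ℂ :=
  ((List.ofFn fun i => pMat U (ξ i)).reverse.prod).mulVec φ₀

/-- The complex inner product `⟨v, w⟩`, conjugate-linear in the first slot. -/
def cdot (v w : Fin 2 → ℂ) : ℂ := ∑ i, (starRingEnd ℂ) (v i) * w i

/-- The decoherence matrix restricted to a set `A` of pairs of paths. -/
def decMat (U : Matrix (Fin 2) (Fin 2) ℂ) (φ₀ : Fin 2 → ℂ) {n : ℕ}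
    (A : Set ((Fin n → Bool) × (Fin n → Bool))) :
    Matrix (Fin n → Bool) (Fin n → Bool) ℂ :=
  Matrix.of fun ξ η =>
    if (ξ, η) ∈ A then cdot (weight U φ₀ ξ) (weight U φ₀ η) else 0

/-- `ξ_1 + ⋯ + ξ_n ∈ ℤ`, each step being `±1`. -/
def pathSum {n : ℕ} (ξ : Fin n → Bool) : ℤ := ∑ i, (if ξ i then 1 else -1)

/-- `A₀^{(n)}`: pairs of paths with the same final direction (paths have length `n+1`). -/
def A0 (n : ℕ) : Set ((Fin (n+1) → Bool) × (Fin (n+1) → Bool)) :=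
  {x | x.1 (Fin.last n) = x.2 (Fin.last n)}

/-- `A_P^{(n)}`: pairs of paths with the same final direction and the same endpoint. -/
def AP (n : ℕ) : Set ((Fin (n+1) → Bool) × (Fin (n+1) → Bool)) :=
  {x | x.1 (Fin.last n) = x.2 (Fin.last n) ∧ pathSum x.1 = pathSum x.2}

/-- `A₁^{(n)}`: the diagonal pairs. -/
def A1 (n : ℕ) : Set ((Fin (n+1) → Bool) × (Fin (n+1) → Bool)) :=
  {x | x.1 = x.2}

/-- The von Neumann entropy `S(D) = −Σᵢ λᵢ log₂ λᵢ`, summing over the eigenvalues with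
multiplicity (the roots of the characteristic polynomial; they are real for a PSD Hermitian
matrix), with the convention `0 · log₂ 0 = 0`. -/
def vnEntropy {I : Type*} [Fintype I] [DecidableEq I] (D : Matrix I I ℂ) : ℝ :=
  -((D.charpoly.roots).map fun lam => lam.re * Real.logb 2 lam.re).sum

/-- The real projection `e_j e_j†`. -/
def projR (b : Bool) : Matrix (Fin 2) (Fin 2) ℝ :=
  Matrix.single (bidx b) (bidx b) 1

/-- The stochastic matrix `M = [[p, q], [q, p]]` of the correlated random walk, `q = 1 − p`. -/
def rwM (p : ℝ) : Matrix (Fin 2) (Fin 2) ℝ := !![p, 1-p; 1-p, p]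

/-- The initial vector `φ = (q₀, p₀)ᵀ` of the correlated random walk, `q₀ = 1 − p₀`. -/
def rwφ (p₀ : ℝ) : Fin 2 → ℝ := ![1 - p₀, p₀]

/-- `P̃_{ξ_n} ⋯ P̃_{ξ_2} φ_{ξ_1}`, where `P̃_j = e_j e_j† M` and `φ_j = e_j e_j† φ`. -/
def rwVec (p p₀ : ℝ) : {n : ℕ} → (Fin n → Bool) → (Fin 2 → ℝ)
  | 0, _ => rwφ p₀
  | n + 1, ξ =>
      ((List.ofFn fun i : Fin n => projR (ξ i.succ) * rwM p).reverse.prod).mulVec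
        ((projR (ξ 0)).mulVec (rwφ p₀))

/-- `p_L^{(n)}(j)`: the probability that the `(p₀,p)`-correlated random walk is at `j`
at time `n`, having arrived from the left. -/
def pL (p p₀ : ℝ) (n : ℕ) (j : ℤ) : ℝ :=
  ∑ ξ ∈ Finset.univ.filter (fun ξ : Fin n → Bool => pathSum ξ = j), rwVec p p₀ ξ 0

/-- `p_R^{(n)}(j)`: the probability that the `(p₀,p)`-correlated random walk is at `j`
at time `n`, having arrived from the right. -/
def pR (p p₀ : ℝ) (n : ℕ) (j : ℤ) : ℝ :=
  ∑ ξ ∈ Finset.univ.filter (fun ξ : Fin n → Bool => pathSum ξ = j), rwVec p p₀ ξ 1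

/-!
A path of length at least one has its weight on the axis `e_j` of its last step `j`, so
`D_{A_P}` is block diagonal with one rank-one block `v_B v_Bᴴ` for each class `B = (ξ_n, Σ ξ)`.
Hence `D_{A_P} = Tᴴ T`, where row `B` of `T` is `v_B`, and `T Tᴴ` is diagonal with entries
`‖v_B‖²`; as `Tᴴ T` and `T Tᴴ` have the same nonzero eigenvalues, the spectrum of `D_{A_P}` is
these squared norms padded with zeros. Unitarity gives `|U_{ij}|² = M_{ij}` and
`|(U φ₀)_i|² = φ_i`, and each step multiplies the weight by a single entry of `U`, so `|w(ξ)|²`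
follows the recursion of the correlated random walk and `‖v_B‖²` is `p_L(j)` or `p_R(j)`.
-/

open Polynomial in
theorem Matrix.sum_map_roots_charpoly_of_mul_eq_diagonal {R I J M : Type*} [CommRing R]
    [IsDomain R] [Fintype I] [Fintype J] [DecidableEq I] [DecidableEq J] [AddCommMonoid M]
    (A : Matrix I J R) (B : Matrix J I R) (g : J → R) (hBA : B * A = diagonal g)
    (F : R → M) (hF : F 0 = 0) :
    ((A * B).charpoly.roots.map F).sum = ∑ j, F (g j) := by
  have hroots := congrArg roots (charpoly_mul_comm' A B)
  rw [hBA, roots_mul ((monic_X_pow _).mul (charpoly_monic _)).ne_zero,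
    roots_mul ((monic_X_pow _).mul (charpoly_monic _)).ne_zero, roots_X_pow, roots_X_pow,
    charpoly_diagonal, roots_prod _ _ (Monic.ne_zero (monic_prod_of_monic _ _
      fun j _ => monic_X_sub_C (g j)))] at hroots
  simpa [hF, Multiset.map_nsmul, Multiset.sum_nsmul, Multiset.map_bind, Multiset.sum_bind] using
    congrArg (fun s => (s.map F).sum) hroots

def fiberMatrix {R I J : Type*} [Zero R] [DecidableEq J] (f : I → J) (v : I → R) :
    Matrix J I R :=
  of fun B ξ => if f ξ = B then v ξ else 0

section FiberMatrix

variable {R I J : Type*} [Semiring R] [StarRing R] [DecidableEq J]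

theorem conjTranspose_fiberMatrix_mul_self_apply [Fintype J] (f : I → J) (v : I → R) (ξ η : I) :
    ((fiberMatrix f v)ᴴ * fiberMatrix f v) ξ η = if f ξ = f η then star (v ξ) * v η else 0 := by
  simp [fiberMatrix, mul_apply, apply_ite star, ite_mul, Finset.sum_ite_eq]

theorem fiberMatrix_mul_conjTranspose_self [Fintype I] (f : I → J) (v : I → R) :
    fiberMatrix f v * (fiberMatrix f v)ᴴ =
      diagonal fun B => ∑ ξ with f ξ = B, v ξ * star (v ξ) := by
  ext B B'
  simp only [fiberMatrix, mul_apply, of_apply, conjTranspose_apply, apply_ite star, star_zero,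
    mul_ite, ite_mul, zero_mul, mul_zero, Finset.sum_ite, Finset.filter_filter,
    Finset.sum_const_zero, add_zero, diagonal_apply]
  split_ifs with h
  · simp [h]
  · exact Finset.sum_eq_zero fun ξ hξ => by grind

end FiberMatrix

theorem vnEntropy_eq_of_apply_eq_ite {I J : Type*} [Fintype I] [DecidableEq I] [Fintype J]
    [DecidableEq J] (D : Matrix I I ℂ) (f : I → J) (v : I → ℂ)
    (hD : ∀ ξ η, D ξ η = if f ξ = f η then star (v ξ) * v η else 0) :
    vnEntropy D = -∑ B, (∑ ξ with f ξ = B, ‖v ξ‖ ^ 2) *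
      Real.logb 2 (∑ ξ with f ξ = B, ‖v ξ‖ ^ 2) := by
  have hgram : D = (fiberMatrix f v)ᴴ * fiberMatrix f v := by
    ext ξ η
    rw [hD, conjTranspose_fiberMatrix_mul_self_apply]
  have hdiag : fiberMatrix f v * (fiberMatrix f v)ᴴ =
      diagonal fun B => ((∑ ξ with f ξ = B, ‖v ξ‖ ^ 2 : ℝ) : ℂ) := by
    simp [fiberMatrix_mul_conjTranspose_self, Complex.mul_conj']
  rw [vnEntropy, hgram, sum_map_roots_charpoly_of_mul_eq_diagonal _ _ _ hdiag _ (by simp)]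
  simp only [Complex.ofReal_re]

theorem Matrix.sum_sq_norm_mulVec_of_mem_unitaryGroup {𝕜 n : Type*} [RCLike 𝕜] [Fintype n]
    [DecidableEq n] {U : Matrix n n 𝕜} (hU : U ∈ unitaryGroup n 𝕜) (v : n → 𝕜) :
    ∑ i, ‖(U *ᵥ v) i‖ ^ 2 = ∑ i, ‖v i‖ ^ 2 := by
  have hsq : ∀ w : n → 𝕜, ((∑ i, ‖w i‖ ^ 2 : ℝ) : 𝕜) = star w ⬝ᵥ w := fun w => by
    simp [dotProduct, RCLike.conj_mul]
  have hdot : star (U *ᵥ v) ⬝ᵥ (U *ᵥ v) = star v ⬝ᵥ v := by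
    rw [star_mulVec, dotProduct_mulVec, vecMul_vecMul, ← star_eq_conjTranspose,
      (mem_unitaryGroup_iff').1 hU, vecMul_one]
  exact_mod_cast (hsq _).trans (hdot.trans (hsq v).symm)

theorem Matrix.sum_sq_norm_col_of_mem_unitaryGroup {𝕜 n : Type*} [RCLike 𝕜] [Fintype n]
    [DecidableEq n] {U : Matrix n n 𝕜} (hU : U ∈ unitaryGroup n 𝕜) (j : n) :
    ∑ i, ‖U i j‖ ^ 2 = 1 := by
  simpa [mulVec_single_one, Pi.single_apply, apply_ite (fun z : 𝕜 => ‖z‖ ^ 2)] using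
    sum_sq_norm_mulVec_of_mem_unitaryGroup hU (Pi.single j 1)

theorem Matrix.sum_sq_norm_row_of_mem_unitaryGroup {𝕜 n : Type*} [RCLike 𝕜] [Fintype n]
    [DecidableEq n] {U : Matrix n n 𝕜} (hU : U ∈ unitaryGroup n 𝕜) (i : n) :
    ∑ j, ‖U i j‖ ^ 2 = 1 :=
  sum_sq_norm_col_of_mem_unitaryGroup (transpose_mem_unitaryGroup_iff.2 hU) i

theorem sq_norm_apply_eq_rwM {U : Matrix (Fin 2) (Fin 2) ℂ} (hU : U ∈ unitaryGroup (Fin 2) ℂ)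
    (i j : Fin 2) : ‖U i j‖ ^ 2 = rwM (‖U 0 0‖ ^ 2) i j := by
  have hcol := sum_sq_norm_col_of_mem_unitaryGroup hU
  have hrow := sum_sq_norm_row_of_mem_unitaryGroup hU
  simp only [Fin.sum_univ_two, Fin.forall_fin_two] at hcol hrow
  fin_cases i <;> fin_cases j <;> simp only [rwM, of_apply, cons_val', cons_val_zero, cons_val_one,
    empty_val', cons_val_fin_one, Fin.zero_eta, Fin.mk_one] <;> linarith

theorem sq_norm_mulVec_apply_eq_rwφ {U : Matrix (Fin 2) (Fin 2) ℂ}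
    (hU : U ∈ unitaryGroup (Fin 2) ℂ) {φ₀ : Fin 2 → ℂ} (hφ₀ : ∑ i, ‖φ₀ i‖ ^ 2 = 1) (i : Fin 2) :
    ‖(U *ᵥ φ₀) i‖ ^ 2 = rwφ (‖(U *ᵥ φ₀) 1‖ ^ 2) i := by
  have h := sum_sq_norm_mulVec_of_mem_unitaryGroup hU φ₀
  rw [hφ₀, Fin.sum_univ_two] at h
  fin_cases i
  · simp only [rwφ, Fin.zero_eta, cons_val_zero]
    linarith
  · simp [rwφ]

theorem Matrix.single_one_mul_mulVec {R n : Type*} [Semiring R] [Fintype n] [DecidableEq n]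
    (i : n) (X : Matrix n n R) (v : n → R) :
    (single i i 1 * X) *ᵥ v = Pi.single i ((X *ᵥ v) i) := by
  rw [← mulVec_mulVec, single_mulVec, one_mul]
  rfl

theorem weight_zero (U : Matrix (Fin 2) (Fin 2) ℂ) (φ₀ : Fin 2 → ℂ) (ξ : Fin 0 → Bool) :
    weight U φ₀ ξ = φ₀ := by
  simp [weight]

theorem weight_succ (U : Matrix (Fin 2) (Fin 2) ℂ) (φ₀ : Fin 2 → ℂ) {n : ℕ}
    (ξ : Fin (n + 1) → Bool) :
    weight U φ₀ ξ = Pi.single (bidx (ξ (Fin.last n)))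
      ((U *ᵥ weight U φ₀ (ξ ∘ Fin.castSucc)) (bidx (ξ (Fin.last n)))) := by
  rw [weight, List.ofFn_succ', List.concat_eq_append, List.reverse_append, List.reverse_singleton,
    List.singleton_append, List.prod_cons, ← mulVec_mulVec, pMat, projC, single_one_mul_mulVec]
  rfl

theorem rwVec_one (p p₀ : ℝ) (ξ : Fin 1 → Bool) :
    rwVec p p₀ ξ = Pi.single (bidx (ξ 0)) (rwφ p₀ (bidx (ξ 0))) := by
  rw [rwVec, List.ofFn_zero, List.reverse_nil, List.prod_nil, one_mulVec, projR, single_mulVec,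
    one_mul]
  rfl

theorem rwVec_succ (p p₀ : ℝ) {n : ℕ} (ξ : Fin (n + 2) → Bool) :
    rwVec p p₀ ξ = Pi.single (bidx (ξ (Fin.last (n + 1))))
      ((rwM p *ᵥ rwVec p p₀ (ξ ∘ Fin.castSucc)) (bidx (ξ (Fin.last (n + 1))))) := by
  rw [rwVec, rwVec, List.ofFn_succ', List.concat_eq_append, List.reverse_append,
    List.reverse_singleton, List.singleton_append, List.prod_cons, ← mulVec_mulVec, projR,
    single_one_mul_mulVec, Fin.succ_last]
  rfl

theorem sq_norm_pi_single {ι E : Type*} [DecidableEq ι] [SeminormedAddCommGroup E] (k : ι)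
    (x : E) : (fun j => ‖(Pi.single k x : ι → E) j‖ ^ 2) = Pi.single k (‖x‖ ^ 2) :=
  funext <| Pi.apply_single (fun _ (z : E) => ‖z‖ ^ 2) (fun _ => by simp) k x

theorem sq_norm_weight_eq_rwVec {U : Matrix (Fin 2) (Fin 2) ℂ} {φ₀ : Fin 2 → ℂ} {p p₀ : ℝ}
    (hU : ∀ i j, ‖U i j‖ ^ 2 = rwM p i j) (hφ₀ : ∀ i, ‖(U *ᵥ φ₀) i‖ ^ 2 = rwφ p₀ i) :
    ∀ {n : ℕ} (ξ : Fin (n + 1) → Bool), (fun i => ‖weight U φ₀ ξ i‖ ^ 2) = rwVec p p₀ ξ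
  | 0, ξ => by
    rw [weight_succ, weight_zero, rwVec_one, sq_norm_pi_single, hφ₀]
    rfl
  | n + 1, ξ => by
    rw [weight_succ, rwVec_succ, ← sq_norm_weight_eq_rwVec hU hφ₀ (ξ ∘ Fin.castSucc),
      weight_succ (ξ := ξ ∘ Fin.castSucc), sq_norm_pi_single, sq_norm_pi_single]
    simp only [mulVec_single, Pi.smul_apply, col_apply, op_smul_eq_mul, norm_mul, mul_pow, hU]

open Finset in
theorem pathSum_eq_two_mul_card_sub {n : ℕ} (ξ : Fin n → Bool) :
    pathSum ξ = 2 * (#{i | ξ i} : ℤ) - n := by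
  have hn : (n : ℤ) = ∑ _i : Fin n, 1 := by simp
  rw [pathSum, natCast_card_filter, mul_sum, hn, ← sum_sub_distrib]
  exact sum_congr rfl fun i _ => by split <;> norm_num

open Finset in
theorem pathSum_mem {n : ℕ} (ξ : Fin n → Bool) :
    pathSum ξ ∈ (Icc (-(n : ℤ)) n).filter (fun j => j % 2 = (n : ℤ) % 2) := by
  have hcard : #{i | ξ i} ≤ n := (card_filter_le _ _).trans (by simp)
  rw [pathSum_eq_two_mul_card_sub, mem_filter, mem_Icc]
  omega

theorem bidx_injective : Function.Injective bidx := by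
  decide

theorem weight_apply_of_ne (U : Matrix (Fin 2) (Fin 2) ℂ) (φ₀ : Fin 2 → ℂ) {n : ℕ}
    (ξ : Fin (n + 1) → Bool) {i : Fin 2} (hi : i ≠ bidx (ξ (Fin.last n))) :
    weight U φ₀ ξ i = 0 := by
  rw [weight_succ, Pi.single_apply, if_neg hi]

theorem decMat_AP_apply (U : Matrix (Fin 2) (Fin 2) ℂ) (φ₀ : Fin 2 → ℂ) {n : ℕ}
    (ξ η : Fin (n + 1) → Bool) :
    decMat U φ₀ (AP n) ξ η =
      if (ξ (Fin.last n), pathSum ξ) = (η (Fin.last n), pathSum η) then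
        star (weight U φ₀ ξ (bidx (ξ (Fin.last n)))) * weight U φ₀ η (bidx (η (Fin.last n)))
      else 0 := by
  rw [decMat, of_apply]
  by_cases h : (ξ, η) ∈ AP n
  · rw [if_pos h]
    obtain ⟨hlast, hsum⟩ : ξ (Fin.last n) = η (Fin.last n) ∧ pathSum ξ = pathSum η := h
    rw [if_pos (Prod.ext hlast hsum), cdot,
      Fintype.sum_eq_single (bidx (ξ (Fin.last n)))
        fun i hi => by rw [weight_apply_of_ne U φ₀ ξ hi, map_zero, zero_mul], hlast]
    rfl
  · rw [if_neg h, if_neg fun h' => h ⟨congrArg Prod.fst h', congrArg Prod.snd h'⟩]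

theorem sum_sq_norm_weight_last_eq {U : Matrix (Fin 2) (Fin 2) ℂ} {φ₀ : Fin 2 → ℂ} {p p₀ : ℝ}
    (hU : ∀ i j, ‖U i j‖ ^ 2 = rwM p i j) (hφ₀ : ∀ i, ‖(U *ᵥ φ₀) i‖ ^ 2 = rwφ p₀ i) {n : ℕ}
    (b : Bool) (j : ℤ) :
    ∑ ξ : Fin (n + 1) → Bool with ξ (Fin.last n) = b ∧ pathSum ξ = j,
        ‖weight U φ₀ ξ (bidx (ξ (Fin.last n)))‖ ^ 2 =
      ∑ ξ : Fin (n + 1) → Bool with pathSum ξ = j, rwVec p p₀ ξ (bidx b) := by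
  simp only [← sq_norm_weight_eq_rwVec hU hφ₀]
  rw [← Finset.filter_filter, Finset.filter_comm, Finset.sum_filter]
  refine Finset.sum_congr rfl fun ξ _ => ?_
  split_ifs with hb
  · rw [hb]
  · rw [weight_apply_of_ne U φ₀ ξ (bidx_injective.ne (Ne.symm hb))]
    simp

/-- Here the paths have length `n + 1`, so `j` runs over `-(n+1), -(n+1)+2, …, n+1`. -/
theorem vnEntropy_decMat_AP_general
    (a b c d α β : ℂ)
    (hU : !![a, b; c, d] ∈ Matrix.unitaryGroup (Fin 2) ℂ)
    (hφ : ‖α‖ ^ 2 + ‖β‖ ^ 2 = 1)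
    (p p₀ : ℝ)
    (hp : p = ‖a‖ ^ 2)
    (hp₀ : p₀ = ‖c * α + d * β‖ ^ 2)
    (n : ℕ) :
    vnEntropy (decMat !![a, b; c, d] ![α, β] (AP n)) =
      -(∑ j ∈ (Finset.Icc (-((n : ℤ) + 1)) ((n : ℤ) + 1)).filter
            (fun j => j % 2 = ((n : ℤ) + 1) % 2),
          (pL p p₀ (n + 1) j * Real.logb 2 (pL p p₀ (n + 1) j) +
           pR p p₀ (n + 1) j * Real.logb 2 (pR p p₀ (n + 1) j))) := by
  have hM : ∀ i j, ‖!![a, b; c, d] i j‖ ^ 2 = rwM p i j := by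
    simpa [← hp] using sq_norm_apply_eq_rwM hU
  have hφ₀ : ∀ i, ‖(!![a, b; c, d] *ᵥ ![α, β]) i‖ ^ 2 = rwφ p₀ i := by
    have hc : (!![a, b; c, d] *ᵥ ![α, β]) 1 = c * α + d * β := by simp [mulVec, dotProduct]
    simpa [hc, ← hp₀] using
      sq_norm_mulVec_apply_eq_rwφ hU (φ₀ := ![α, β]) (by simpa [Fin.sum_univ_two] using hφ)
  set S := (Finset.Icc (-((n : ℤ) + 1)) ((n : ℤ) + 1)).filter
    (fun j => j % 2 = ((n : ℤ) + 1) % 2)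
  let blk : (Fin (n + 1) → Bool) → Bool × S := fun ξ =>
    (ξ (Fin.last n), ⟨pathSum ξ, by exact_mod_cast pathSum_mem ξ⟩)
  let v ξ := weight !![a, b; c, d] ![α, β] ξ (bidx (ξ (Fin.last n)))
  have hfiber : ∀ B, ∑ ξ with blk ξ = B, ‖v ξ‖ ^ 2 =
      ∑ ξ : Fin (n + 1) → Bool with pathSum ξ = B.2, rwVec p p₀ ξ (bidx B.1) := fun B => by
    simp only [blk, Prod.ext_iff, Subtype.ext_iff]
    exact sum_sq_norm_weight_last_eq hM hφ₀ B.1 B.2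
  rw [vnEntropy_eq_of_apply_eq_ite _ blk v fun ξ η => by
    rw [decMat_AP_apply]; simp [blk, v, Prod.ext_iff, Subtype.ext_iff]]
  simp only [hfiber, Fintype.sum_prod_type, Fintype.sum_bool]
  rw [← Finset.sum_add_distrib, ← Finset.sum_coe_sort S]
  exact congrArg _ (Finset.sum_congr rfl fun j _ => add_comm _ _)

/-- `S_{A_P^{(n)}} = −Σ_j (p_L(j) log₂ p_L(j) + p_R(j) log₂ p_R(j))`, the sum
running over `j ∈ {-(n+1), -(n+1)+2, …, n+1}` (paths of length `n+1`; `0 log₂ 0 = 0`). -/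
theorem vnEntropy_decMat_AP
    (a b c d α β : ℂ)
    (hU : !![a, b; c, d] ∈ Matrix.unitaryGroup (Fin 2) ℂ)
    (habcd : a * b * c * d ≠ 0)
    (hφ : ‖α‖ ^ 2 + ‖β‖ ^ 2 = 1)
    (p q p₀ q₀ : ℝ)
    (hp : p = ‖a‖ ^ 2) (hq : q = 1 - p)
    (hp₀ : p₀ = ‖c * α + d * β‖ ^ 2) (hq₀ : q₀ = 1 - p₀)
    (n : ℕ) :
    vnEntropy (decMat !![a, b; c, d] ![α, β] (AP n)) =
      -(∑ j ∈ (Finset.Icc (-((n : ℤ) + 1)) ((n : ℤ) + 1)).filter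
            (fun j => j % 2 = ((n : ℤ) + 1) % 2),
          (pL p p₀ (n + 1) j * Real.logb 2 (pL p p₀ (n + 1) j) +
           pR p p₀ (n + 1) j * Real.logb 2 (pR p p₀ (n + 1) j))) :=
  vnEntropy_decMat_AP_general a b c d α β hU hφ p p₀ hp hp₀ n
end
end

section
/- For every n ≥ 1, the von Neumann entropy of the decoherence matrix restricted to A₁^{(n)} satisfies the exact formula S_{A₁^{(n)}} = (n−1)·|p log₂ p + q log₂ q| + |p₀ log₂ p₀ + q₀ log₂ q₀| (with the convention 0·log₂ 0 = 0). -/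
open Matrix Filter
open scoped BigOperators Classical

noncomputable section

/-! Each `P_j` projects onto `e_j`, so for a nonempty path `w(ξ)` is a multiple of `e_{ξ_n}`, and
appending a step `j` multiplies `‖w(ξ)‖²` by `|U_{j ξ_n}|²`. Hence the diagonal of `D_{A₁}` is the
path law of a Markov chain on `{-1, 1}` with initial law `(q₀, p₀)` (`Uφ₀` is a unit vector) and
transition matrix `[[p, q], [q, p]]` (`U` is unitary). By the chain rule for entropy, which rests on
`x y log(x y) = y (x log x) + x (y log y)`, each of the `n` steps after the first adds `H(p)` to the
entropy `H(p₀)` of the first. -/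

lemma Real.mul_logb_mul (B x y : ℝ) :
    x * y * Real.logb B (x * y) = y * (x * Real.logb B x) + x * (y * Real.logb B y) := by
  rcases eq_or_ne x 0 with rfl | hx
  · simp
  rcases eq_or_ne y 0 with rfl | hy
  · simp
  rw [Real.logb_mul hx hy]
  ring

def binEntropy₂ (x : ℝ) : ℝ := -(x * Real.logb 2 x + (1 - x) * Real.logb 2 (1 - x))

lemma binEntropy₂_one_sub (x : ℝ) : binEntropy₂ (1 - x) = binEntropy₂ x := by
  rw [binEntropy₂, binEntropy₂, sub_sub_cancel, add_comm]

lemma mul_logb_add_mul_logb_of_add_eq_one {x y : ℝ} (h : x + y = 1) :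
    x * Real.logb 2 x + y * Real.logb 2 y = -binEntropy₂ x := by
  rw [binEntropy₂, neg_neg, ← h, add_sub_cancel_left]

lemma abs_mul_logb_add_mul_logb_one_sub {x : ℝ} (h₀ : 0 ≤ x) (h₁ : x ≤ 1) :
    |x * Real.logb 2 x + (1 - x) * Real.logb 2 (1 - x)| = binEntropy₂ x :=
  abs_of_nonpos <| add_nonpos
    (mul_nonpos_of_nonneg_of_nonpos h₀ (Real.logb_nonpos one_lt_two h₀ h₁))
    (mul_nonpos_of_nonneg_of_nonpos (sub_nonneg.mpr h₁)
      (Real.logb_nonpos one_lt_two (sub_nonneg.mpr h₁) (sub_le_self 1 h₀)))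

lemma Fin.sum_pi_succ_eq_sum_sum_snoc {α M : Type*} [Fintype α] [AddCommMonoid M] {m : ℕ}
    (g : (Fin (m + 1) → α) → M) :
    ∑ ξ, g ξ = ∑ ξ : Fin m → α, ∑ b, g (Fin.snoc ξ b) := by
  rw [← (Fin.snocEquiv fun _ => α).sum_comp g, Fintype.sum_prod_type, Finset.sum_comm]
  rfl

section MarkovChain

variable {α : Type*} [Fintype α] {P : ∀ m : ℕ, (Fin (m + 1) → α) → ℝ} {μ : α → ℝ}
  {T : α → α → ℝ}

lemma sum_markov_eq (hP₀ : ∀ ξ, P 0 ξ = μ (ξ 0))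
    (hP : ∀ m ξ b, P (m + 1) (Fin.snoc ξ b) = T b (ξ (Fin.last m)) * P m ξ)
    (hT : ∀ a, ∑ b, T b a = 1) (m : ℕ) :
    ∑ ξ, P m ξ = ∑ a, μ a := by
  induction m with
  | zero => simp only [hP₀]; exact (Equiv.funUnique (Fin 1) α).sum_comp μ
  | succ m ih =>
    simp only [Fin.sum_pi_succ_eq_sum_sum_snoc (P (m + 1)), hP, ← Finset.sum_mul, hT, one_mul, ih]

lemma sum_markov_mul_logb_eq {B H : ℝ} (hP₀ : ∀ ξ, P 0 ξ = μ (ξ 0))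
    (hP : ∀ m ξ b, P (m + 1) (Fin.snoc ξ b) = T b (ξ (Fin.last m)) * P m ξ)
    (hT : ∀ a, ∑ b, T b a = 1) (hH : ∀ a, ∑ b, T b a * Real.logb B (T b a) = H) (m : ℕ) :
    ∑ ξ, P m ξ * Real.logb B (P m ξ) = ∑ a, μ a * Real.logb B (μ a) + m * H * ∑ a, μ a := by
  induction m with
  | zero =>
    simp only [hP₀, CharP.cast_eq_zero, zero_mul, add_zero]
    exact (Equiv.funUnique (Fin 1) α).sum_comp fun a => μ a * Real.logb B (μ a)
  | succ m ih =>
    have step : ∀ ξ : Fin (m + 1) → α, ∑ b, P (m + 1) (Fin.snoc ξ b) *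
        Real.logb B (P (m + 1) (Fin.snoc ξ b)) = P m ξ * Real.logb B (P m ξ) + H * P m ξ := by
      intro ξ
      simp only [hP, Real.mul_logb_mul, Finset.sum_add_distrib, ← Finset.sum_mul,
        ← Finset.mul_sum, hT, hH]
      ring
    rw [Fin.sum_pi_succ_eq_sum_sum_snoc, Finset.sum_congr rfl fun ξ _ => step ξ,
      Finset.sum_add_distrib, ih, ← Finset.mul_sum, sum_markov_eq hP₀ hP hT]
    push_cast
    ring

end MarkovChain

lemma Matrix.sum_normSq_mulVec_of_mem_unitaryGroup {n : Type*} [Fintype n] [DecidableEq n]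
    {U : Matrix n n ℂ} (hU : U ∈ unitaryGroup n ℂ) (v : n → ℂ) :
    ∑ i, Complex.normSq ((U *ᵥ v) i) = ∑ i, Complex.normSq (v i) := by
  have h : star (U *ᵥ v) ⬝ᵥ (U *ᵥ v) = star v ⬝ᵥ v := by
    rw [star_mulVec, dotProduct_mulVec, vecMul_vecMul, ← star_eq_conjTranspose,
      mem_unitaryGroup_iff'.mp hU, vecMul_one]
  simp only [dotProduct, Pi.star_apply, Complex.star_def, ← Complex.normSq_eq_conj_mul_self] at h
  exact_mod_cast h

lemma Matrix.sum_normSq_col_of_mem_unitaryGroup {n : Type*} [Fintype n] [DecidableEq n]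
    {U : Matrix n n ℂ} (hU : U ∈ unitaryGroup n ℂ) (j : n) :
    ∑ i, Complex.normSq (U i j) = 1 := by
  have h := sum_normSq_mulVec_of_mem_unitaryGroup hU (Pi.single j 1)
  simpa [Pi.single_apply, apply_ite Complex.normSq] using h

lemma Matrix.sum_normSq_row_of_mem_unitaryGroup {n : Type*} [Fintype n] [DecidableEq n]
    {U : Matrix n n ℂ} (hU : U ∈ unitaryGroup n ℂ) (i : n) :
    ∑ j, Complex.normSq (U i j) = 1 := by
  simpa using sum_normSq_col_of_mem_unitaryGroup (Unitary.star_mem hU) i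

lemma Matrix.roots_charpoly_diagonal {n : Type*} [Fintype n] [DecidableEq n] (d : n → ℂ) :
    (diagonal d).charpoly.roots = Finset.univ.val.map d := by
  rw [charpoly_diagonal, Polynomial.roots_prod _ _
    (Finset.prod_ne_zero_iff.mpr fun i _ => Polynomial.X_sub_C_ne_zero (d i))]
  simp

lemma vnEntropy_diagonal_ofReal {I : Type*} [Fintype I] [DecidableEq I] (f : I → ℝ) :
    vnEntropy (diagonal fun i => (f i : ℂ)) = -∑ i, f i * Real.logb 2 (f i) := by
  rw [vnEntropy, roots_charpoly_diagonal, Multiset.map_map]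
  rfl

lemma sum_normSq_single {n : Type*} [Fintype n] [DecidableEq n] (j : n) (s : ℂ) :
    ∑ i, Complex.normSq ((Pi.single j s : n → ℂ) i) = Complex.normSq s := by
  simp [Pi.single_apply, apply_ite Complex.normSq]

lemma projC_mulVec (b : Bool) (v : Fin 2 → ℂ) : projC b *ᵥ v = Pi.single (bidx b) (v (bidx b)) := by
  ext i
  simp [projC, mulVec, Matrix.single, dotProduct, Pi.single_apply, ite_and, eq_comm]

section Weight

variable (U : Matrix (Fin 2) (Fin 2) ℂ) (φ₀ : Fin 2 → ℂ)

lemma weight_of_isEmpty (ξ : Fin 0 → Bool) : weight U φ₀ ξ = φ₀ := by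
  simp [weight]

lemma weight_snoc {m : ℕ} (ξ : Fin m → Bool) (b : Bool) :
    weight U φ₀ (Fin.snoc ξ b) = Pi.single (bidx b) ((U *ᵥ weight U φ₀ ξ) (bidx b)) := by
  simp only [weight, List.ofFn_succ', Fin.snoc_castSucc, Fin.snoc_last, List.concat_eq_append,
    List.reverse_append, List.reverse_singleton, List.singleton_append, List.prod_cons,
    ← mulVec_mulVec, pMat, projC_mulVec]

def pathProb {m : ℕ} (ξ : Fin m → Bool) : ℝ := ∑ i, Complex.normSq (weight U φ₀ ξ i)

lemma pathProb_fin_one (ξ : Fin 1 → Bool) :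
    pathProb U φ₀ ξ = Complex.normSq ((U *ᵥ φ₀) (bidx (ξ 0))) := by
  rw [← Fin.snoc_init_self ξ, pathProb, weight_snoc, weight_of_isEmpty, sum_normSq_single]
  rfl

lemma pathProb_snoc {m : ℕ} (ξ : Fin (m + 1) → Bool) (b : Bool) :
    pathProb U φ₀ (Fin.snoc ξ b) =
      Complex.normSq (U (bidx b) (bidx (ξ (Fin.last m)))) * pathProb U φ₀ ξ := by
  obtain ⟨ζ, c, rfl⟩ : ∃ ζ c, ξ = Fin.snoc ζ c := ⟨_, _, (Fin.snoc_init_self ξ).symm⟩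
  simp only [pathProb, weight_snoc, sum_normSq_single, Fin.snoc_last, mulVec_single, Pi.smul_apply,
    col_apply, op_smul_eq_mul, Complex.normSq_mul]

lemma decMat_A1_eq_diagonal (n : ℕ) :
    decMat U φ₀ (A1 n) = diagonal fun ξ => (pathProb U φ₀ ξ : ℂ) := by
  ext ξ η
  by_cases h : ξ = η
  · subst h
    simp [decMat, A1, cdot, pathProb, Complex.normSq_eq_conj_mul_self]
  · simp [decMat, A1, h]

end Weight

lemma sum_bool_comp_bidx {M : Type*} [AddCommMonoid M] (f : Fin 2 → M) :
    ∑ b : Bool, f (bidx b) = ∑ i, f i := by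
  simp [Fin.sum_univ_two, bidx, add_comm]

section UnitaryWalk

variable {U : Matrix (Fin 2) (Fin 2) ℂ} (hU : U ∈ unitaryGroup (Fin 2) ℂ)
include hU

lemma sum_bool_normSq_mul_logb_of_mem_unitaryGroup (j : Fin 2) :
    ∑ b : Bool, Complex.normSq (U (bidx b) j) * Real.logb 2 (Complex.normSq (U (bidx b) j)) =
      -binEntropy₂ (Complex.normSq (U 0 0)) := by
  have hcol := sum_normSq_col_of_mem_unitaryGroup hU j
  have hrow := sum_normSq_row_of_mem_unitaryGroup hU 0
  rw [Fin.sum_univ_two] at hcol hrow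
  rw [sum_bool_comp_bidx fun i => Complex.normSq (U i j) * Real.logb 2 (Complex.normSq (U i j)),
    Fin.sum_univ_two, mul_logb_add_mul_logb_of_add_eq_one hcol]
  match j with
  | 0 => rfl
  | 1 => rw [eq_sub_of_add_eq' hrow, binEntropy₂_one_sub]

lemma sum_pathProb_mul_logb {φ₀ : Fin 2 → ℂ} (hφ₀ : ∑ i, Complex.normSq (φ₀ i) = 1) (n : ℕ) :
    ∑ ξ : Fin (n + 1) → Bool, pathProb U φ₀ ξ * Real.logb 2 (pathProb U φ₀ ξ) =
      -(n * binEntropy₂ (Complex.normSq (U 0 0)) +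
        binEntropy₂ (Complex.normSq ((U *ᵥ φ₀) 1))) := by
  have hμ : ∑ i, Complex.normSq ((U *ᵥ φ₀) i) = 1 := by
    rw [sum_normSq_mulVec_of_mem_unitaryGroup hU, hφ₀]
  have hμ₂ : Complex.normSq ((U *ᵥ φ₀) 1) + Complex.normSq ((U *ᵥ φ₀) 0) = 1 := by
    rw [add_comm, ← Fin.sum_univ_two fun i => Complex.normSq ((U *ᵥ φ₀) i), hμ]
  have hT (j : Fin 2) : ∑ b : Bool, Complex.normSq (U (bidx b) j) = 1 := by
    rw [sum_bool_comp_bidx fun i => Complex.normSq (U i j), sum_normSq_col_of_mem_unitaryGroup hU]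
  have chain := sum_markov_mul_logb_eq (P := fun _ => pathProb U φ₀)
    (μ := fun b => Complex.normSq ((U *ᵥ φ₀) (bidx b))) (pathProb_fin_one U φ₀)
    (fun _ ξ b => pathProb_snoc U φ₀ ξ b) (fun a => hT (bidx a))
    (fun a => sum_bool_normSq_mul_logb_of_mem_unitaryGroup hU (bidx a)) n
  rw [chain, sum_bool_comp_bidx fun i => Complex.normSq ((U *ᵥ φ₀) i), hμ,
    sum_bool_comp_bidx fun i => Complex.normSq ((U *ᵥ φ₀) i) *
      Real.logb 2 (Complex.normSq ((U *ᵥ φ₀) i)),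
    Fin.sum_univ_two, add_comm (Complex.normSq ((U *ᵥ φ₀) 0) * _),
    mul_logb_add_mul_logb_of_add_eq_one hμ₂]
  ring

end UnitaryWalk

lemma normSq_apply_le_one {n : Type*} [Fintype n] {v : n → ℂ}
    (hv : ∑ i, Complex.normSq (v i) = 1) (j : n) : Complex.normSq (v j) ≤ 1 :=
  hv ▸ Finset.single_le_sum (fun i _ => Complex.normSq_nonneg (v i)) (Finset.mem_univ j)

lemma vnEntropy_decMat_A1_of_mem_unitaryGroup {U : Matrix (Fin 2) (Fin 2) ℂ}
    (hU : U ∈ unitaryGroup (Fin 2) ℂ) {φ₀ : Fin 2 → ℂ} (hφ₀ : ∑ i, Complex.normSq (φ₀ i) = 1)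
    (n : ℕ) :
    vnEntropy (decMat U φ₀ (A1 n)) =
      n * binEntropy₂ (Complex.normSq (U 0 0)) + binEntropy₂ (Complex.normSq ((U *ᵥ φ₀) 1)) := by
  rw [decMat_A1_eq_diagonal, vnEntropy_diagonal_ofReal, sum_pathProb_mul_logb hU hφ₀, neg_neg]

/-- Paths have length `n + 1` here, so the factor `n − 1` of the informal statement becomes `n`. -/
theorem vnEntropy_decMat_A1_general
    (a b c d α β : ℂ)
    (hU : !![a, b; c, d] ∈ Matrix.unitaryGroup (Fin 2) ℂ)
    (hφ : ‖α‖ ^ 2 + ‖β‖ ^ 2 = 1)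
    (p q p₀ q₀ : ℝ)
    (hp : p = ‖a‖ ^ 2) (hq : q = 1 - p)
    (hp₀ : p₀ = ‖c * α + d * β‖ ^ 2) (hq₀ : q₀ = 1 - p₀)
    (n : ℕ) :
    vnEntropy (decMat !![a, b; c, d] ![α, β] (A1 n)) =
      n * |p * Real.logb 2 p + q * Real.logb 2 q| +
        |p₀ * Real.logb 2 p₀ + q₀ * Real.logb 2 q₀| := by
  set U := !![a, b; c, d]
  have hφ₀ : ∑ i, Complex.normSq (![α, β] i) = 1 := by
    simpa [Fin.sum_univ_two, Complex.sq_norm] using hφ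
  have hp' : p = Complex.normSq (U 0 0) := by simp [U, hp, Complex.sq_norm]
  have hp₀' : p₀ = Complex.normSq ((U *ᵥ ![α, β]) 1) := by
    simp [U, hp₀, Complex.sq_norm, mulVec, dotProduct, Fin.sum_univ_two]
  have hp_le : p ≤ 1 := hp' ▸ normSq_apply_le_one (sum_normSq_col_of_mem_unitaryGroup hU 0) 0
  have hp₀_le : p₀ ≤ 1 :=
    hp₀' ▸ normSq_apply_le_one ((sum_normSq_mulVec_of_mem_unitaryGroup hU _).trans hφ₀) 1
  rw [vnEntropy_decMat_A1_of_mem_unitaryGroup hU hφ₀, ← hp', ← hp₀', hq, hq₀,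
    abs_mul_logb_add_mul_logb_one_sub (hp' ▸ Complex.normSq_nonneg _) hp_le,
    abs_mul_logb_add_mul_logb_one_sub (hp₀' ▸ Complex.normSq_nonneg _) hp₀_le]

/-- `S_{A₁^{(n)}} = (n−1)|p log₂ p + q log₂ q| + |p₀ log₂ p₀ + q₀ log₂ q₀|`
(paths of length `n+1`, so the first factor is `n`). -/
theorem vnEntropy_decMat_A1
    (a b c d α β : ℂ)
    (hU : !![a, b; c, d] ∈ Matrix.unitaryGroup (Fin 2) ℂ)
    (habcd : a * b * c * d ≠ 0)
    (hφ : ‖α‖ ^ 2 + ‖β‖ ^ 2 = 1)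
    (p q p₀ q₀ : ℝ)
    (hp : p = ‖a‖ ^ 2) (hq : q = 1 - p)
    (hp₀ : p₀ = ‖c * α + d * β‖ ^ 2) (hq₀ : q₀ = 1 - p₀)
    (n : ℕ) :
    vnEntropy (decMat !![a, b; c, d] ![α, β] (A1 n)) =
      n * |p * Real.logb 2 p + q * Real.logb 2 q| +
        |p₀ * Real.logb 2 p₀ + q₀ * Real.logb 2 q₀| :=
  vnEntropy_decMat_A1_general a b c d α β hU hφ p q p₀ q₀ hp hq hp₀ hq₀ n
end
end
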